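/- The set Γ(C ↻ H) of H-equivariant cocharacters forms a group under the convolution product, with inverse of φ given by φ^{⋆−1}(c) = S(φ(c^{(0)})) c^{(1)}. -/

import Mathlib

open TensorProduct LinearMap Coalgebra

/-- A coflat Hopf coaction of a Hopf algebra `H` on a coalgebra `C`. -/
structure IsCoflatCoaction (R C H : Type) [CommRing R]
    [AddCommGroup C] [Module R C] [Coalgebra R C]
    [Ring H] [HopfAlgebra R H]
    (δ : C →ₗ[R] C ⊗[R] H) : Prop where
  coassoc : (TensorProduct.assoc R C H H).toLinearMap ∘ₗ
      (TensorProduct.map δ (LinearMap.id : H →ₗ[R] H)) ∘ₗ δ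
      = (TensorProduct.map (LinearMap.id : C →ₗ[R] C) (Coalgebra.comul (R := R))) ∘ₗ δ
  counitary : (TensorProduct.rid R C).toLinearMap ∘ₗ
      (TensorProduct.map (LinearMap.id : C →ₗ[R] C) (Coalgebra.counit (R := R))) ∘ₗ δ
      = LinearMap.id
  coflat_mul : (TensorProduct.map (LinearMap.id : (C ⊗[R] C) →ₗ[R] C ⊗[R] C)
        (LinearMap.mul' R H)) ∘ₗ
      (TensorProduct.tensorTensorTensorComm R C H C H).toLinearMap ∘ₗ
      (TensorProduct.map δ δ) ∘ₗ Coalgebra.comul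
      = (TensorProduct.map (Coalgebra.comul (R := R)) (LinearMap.id : H →ₗ[R] H)) ∘ₗ δ
  coflat_counit : (LinearMap.mul' R R) ∘ₗ
      (TensorProduct.map (Coalgebra.counit (R := R)) (Coalgebra.counit (R := R))) ∘ₗ δ
      = Coalgebra.counit

section Cocharacters

variable (R C H : Type) [CommRing R] [AddCommGroup C] [Module R C] [Coalgebra R C]
  [Ring H] [HopfAlgebra R H]

/-- The convolution product on `Hom(C,H)`: `(φ ⋆ ψ)(c) = φ(c₍₁₎) ψ(c₍₂₎)`. -/
noncomputable def conv (φ ψ : C →ₗ[R] H) : C →ₗ[R] H :=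
  (LinearMap.mul' R H) ∘ₗ (TensorProduct.map φ ψ) ∘ₗ Coalgebra.comul

/-- The convolution unit `c ↦ ε(c) 1`. -/
noncomputable def convOne : C →ₗ[R] H :=
  (Algebra.linearMap R H) ∘ₗ Coalgebra.counit

variable (δ : C →ₗ[R] C ⊗[R] H)

/-- `c ↦ φ(c₍₁₎⁽⁰⁾) ⊗ c₍₁₎⁽¹⁾ ψ(c₍₂₎)` as a linear map `C → H ⊗ H`. -/
noncomputable def coactTerm (φ ψ : C →ₗ[R] H) : C →ₗ[R] H ⊗[R] H :=
  (TensorProduct.map (LinearMap.id : H →ₗ[R] H) (LinearMap.mul' R H)) ∘ₗ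
    (TensorProduct.assoc R H H H).toLinearMap ∘ₗ
    (TensorProduct.map (TensorProduct.map φ (LinearMap.id : H →ₗ[R] H)) ψ) ∘ₗ
    (TensorProduct.map δ (LinearMap.id : C →ₗ[R] C)) ∘ₗ Coalgebra.comul

/-- `c ↦ c₍₁₎⁽⁰⁾ ⊗ c₍₁₎⁽¹⁾ φ(c₍₂₎)` as a linear map `C → C ⊗ H`. -/
noncomputable def comodCondLHS (φ : C →ₗ[R] H) : C →ₗ[R] C ⊗[R] H :=
  (TensorProduct.map (LinearMap.id : C →ₗ[R] C) (LinearMap.mul' R H)) ∘ₗ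
    (TensorProduct.assoc R C H H).toLinearMap ∘ₗ
    (TensorProduct.map δ φ) ∘ₗ Coalgebra.comul

/-- `c ↦ c₍₂₎⁽⁰⁾ ⊗ φ(c₍₁₎) c₍₂₎⁽¹⁾` as a linear map `C → C ⊗ H`. -/
noncomputable def comodCondRHS (φ : C →ₗ[R] H) : C →ₗ[R] C ⊗[R] H :=
  (TensorProduct.map (LinearMap.id : C →ₗ[R] C) (LinearMap.mul' R H)) ∘ₗ
    (TensorProduct.assoc R C H H).toLinearMap ∘ₗ
    (TensorProduct.map ((TensorProduct.comm R H C).toLinearMap)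
      (LinearMap.id : H →ₗ[R] H)) ∘ₗ
    (TensorProduct.assoc R H C H).symm.toLinearMap ∘ₗ
    (TensorProduct.map φ δ) ∘ₗ Coalgebra.comul

/-- An `H`-equivariant cocharacter: convolution invertible, counitary, satisfying the
coaction condition and the comodule condition. -/
structure IsCocharacter (φ : C →ₗ[R] H) : Prop where
  invertible : ∃ ψ : C →ₗ[R] H, conv R C H φ ψ = convOne R C H ∧ conv R C H ψ φ = convOne R C H
  counitary : (Coalgebra.counit (R := R)) ∘ₗ φ = Coalgebra.counit
  coaction : (Coalgebra.comul (R := R)) ∘ₗ φ = coactTerm R C H δ φ φ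
  comodule : comodCondLHS R C H δ φ = comodCondRHS R C H δ φ

end Cocharacters

/-!
Convolution makes `Hom(C, H)` a monoid, and each condition defining a cocharacter `φ` is
multiplicative in `φ`. Counitarity says that `ε ∘ φ` is the unit of `Hom(C, R)`. The coaction
condition reads `Δ ∘ φ = ρ(φ) ⋆ (1 ⊗ φ)` with `ρ(φ) = (φ ⊗ id) ∘ δ`; coflatness makes `ρ`
multiplicative, and `ρ` is unital because `f(c) = ε(c⁽⁰⁾) c⁽¹⁾` equals `ε(c) 1`: its twist
`g(c) = S(f(c⁽⁰⁾)) c⁽¹⁾` is `ε` by coassociativity and satisfies `g ⋆ f = g` by coflatness, so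
`f = g ⋆ f = g = 1`. The comodule condition becomes the commutation of `δ` with `1 ⊗ φ` once
`C ⊗ H` is embedded in the algebra `T(C) ⊗ H`, so it survives products and inverses; pushed forward
along `T(C) ⊗ H → H ⊗ H` it lets `1 ⊗ φ` pass `ρ(ψ)` when expanding `Δ ∘ (φ ⋆ ψ)`. Finally, the
coaction condition and the antipode axiom give `S(φ(c⁽⁰⁾)) c⁽¹⁾ ⋆ φ = 1` directly.
-/

open WithConv

namespace AlgHom

variable {R C A B D : Type*} [CommSemiring R] [AddCommMonoid C] [Module R C] [Coalgebra R C]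
  [Semiring A] [Algebra R A] [Semiring B] [Algebra R B] [Semiring D] [Algebra R D]

noncomputable def compLeftConv (α : A →ₐ[R] B) :
    WithConv (C →ₗ[R] A) →* WithConv (C →ₗ[R] B) where
  toFun f := toConv (α.toLinearMap ∘ₗ f.ofConv)
  map_one' := by ext; simp
  map_mul' f g := WithConv.ext (LinearMap.algHom_comp_convMul_distrib α f g)

@[simp]
lemma ofConv_compLeftConv (α : A →ₐ[R] B) (f : WithConv (C →ₗ[R] A)) :
    (α.compLeftConv f).ofConv = α.toLinearMap ∘ₗ f.ofConv := rfl

lemma compLeftConv_comp (β : B →ₐ[R] D) (α : A →ₐ[R] B) (f : WithConv (C →ₗ[R] A)) :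
    (β.comp α).compLeftConv f = β.compLeftConv (α.compLeftConv f) := rfl

end AlgHom

lemma TensorProduct.map_id_injective_of_leftInverse {R M P N : Type*} [CommSemiring R]
    [AddCommMonoid M] [AddCommMonoid P] [AddCommMonoid N] [Module R M] [Module R P] [Module R N]
    {f : M →ₗ[R] P} {g : P →ₗ[R] M} (h : Function.LeftInverse g f) :
    Function.Injective (map f (LinearMap.id : N →ₗ[R] N)) := by
  refine Function.LeftInverse.injective (g := map g LinearMap.id) fun x => ?_
  rw [← LinearMap.comp_apply, ← map_comp, LinearMap.comp_id,
    show g ∘ₗ f = LinearMap.id from LinearMap.ext h, map_id, LinearMap.id_apply]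

lemma TensorProduct.map_comp_map_comp {R M N P Q M' N' X : Type*} [CommSemiring R]
    [AddCommMonoid M] [AddCommMonoid N] [AddCommMonoid P] [AddCommMonoid Q] [AddCommMonoid M']
    [AddCommMonoid N'] [AddCommMonoid X] [Module R M] [Module R N] [Module R P] [Module R Q]
    [Module R M'] [Module R N'] [Module R X]
    (f : M →ₗ[R] P) (g : N →ₗ[R] Q) (f' : M' →ₗ[R] M) (g' : N' →ₗ[R] N)
    (h : X →ₗ[R] M' ⊗[R] N') :
    map f g ∘ₗ map f' g' ∘ₗ h = map (f ∘ₗ f') (g ∘ₗ g') ∘ₗ h := by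
  rw [← LinearMap.comp_assoc, ← map_comp]

lemma HopfAlgebra.mul'_comp_map_antipode_comp_comul {R H : Type*} [CommSemiring R] [Semiring H]
    [HopfAlgebra R H] :
    mul' R H ∘ₗ map (HopfAlgebra.antipode R) LinearMap.id ∘ₗ comul =
      Algebra.linearMap R H ∘ₗ counit :=
  HopfAlgebra.mul_antipode_rTensor_comul

section Cocharacter

variable {R C H : Type} [CommRing R] [AddCommGroup C] [Module R C] [Coalgebra R C]
  [Ring H] [HopfAlgebra R H] (δ : C →ₗ[R] C ⊗[R] H)

local notation "ι₂" => Algebra.TensorProduct.includeRight (R := R) (A := H) (B := H)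
local notation "ιT" => Algebra.TensorProduct.includeRight (R := R) (A := TensorAlgebra R C) (B := H)

noncomputable def coactMap (φ : WithConv (C →ₗ[R] H)) : WithConv (C →ₗ[R] H ⊗[R] H) :=
  toConv (map φ.ofConv LinearMap.id ∘ₗ δ)

noncomputable def tensorAlgebraCoaction : WithConv (C →ₗ[R] TensorAlgebra R C ⊗[R] H) :=
  toConv (map (TensorAlgebra.ι R) LinearMap.id ∘ₗ δ)

noncomputable def antipodeTwist (φ : C →ₗ[R] H) : WithConv (C →ₗ[R] H) :=
  toConv (mul' R H ∘ₗ map (HopfAlgebra.antipode R ∘ₗ φ) LinearMap.id ∘ₗ δ)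

noncomputable def counitCoaction : C →ₗ[R] H :=
  (TensorProduct.lid R H).toLinearMap ∘ₗ map counit LinearMap.id ∘ₗ δ

lemma toConv_map_ι_comp_comodCondLHS (φ : C →ₗ[R] H) :
    toConv (map (TensorAlgebra.ι R) LinearMap.id ∘ₗ comodCondLHS R C H δ φ) =
      tensorAlgebraCoaction δ * AlgHom.compLeftConv ιT (toConv φ) := by
  have key : map (TensorAlgebra.ι R) LinearMap.id ∘ₗ map LinearMap.id (mul' R H) ∘ₗ
      (TensorProduct.assoc R C H H).toLinearMap =
      mul' R (TensorAlgebra R C ⊗[R] H) ∘ₗ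
        map (map (TensorAlgebra.ι R) LinearMap.id) (ιT).toLinearMap := by
    ext; simp
  ext1
  simpa only [comodCondLHS, tensorAlgebraCoaction, LinearMap.convMul_def, ofConv_toConv,
    AlgHom.ofConv_compLeftConv, map_comp, LinearMap.comp_assoc]
    using congrArg (· ∘ₗ map δ φ ∘ₗ comul) key

lemma toConv_map_ι_comp_comodCondRHS (φ : C →ₗ[R] H) :
    toConv (map (TensorAlgebra.ι R) LinearMap.id ∘ₗ comodCondRHS R C H δ φ) =
      AlgHom.compLeftConv ιT (toConv φ) * tensorAlgebraCoaction δ := by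
  have key : map (TensorAlgebra.ι R) LinearMap.id ∘ₗ map LinearMap.id (mul' R H) ∘ₗ
      (TensorProduct.assoc R C H H).toLinearMap ∘ₗ
      map (TensorProduct.comm R H C).toLinearMap LinearMap.id ∘ₗ
      (TensorProduct.assoc R H C H).symm.toLinearMap =
      mul' R (TensorAlgebra R C ⊗[R] H) ∘ₗ
        map (ιT).toLinearMap (map (TensorAlgebra.ι R) LinearMap.id) := by
    ext; simp
  ext1
  simpa only [comodCondRHS, tensorAlgebraCoaction, LinearMap.convMul_def, ofConv_toConv,
    AlgHom.ofConv_compLeftConv, map_comp, LinearMap.comp_assoc]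
    using congrArg (· ∘ₗ map φ δ ∘ₗ comul) key

lemma comodCond_iff_commute (φ : C →ₗ[R] H) :
    comodCondLHS R C H δ φ = comodCondRHS R C H δ φ ↔
      Commute (tensorAlgebraCoaction δ) (AlgHom.compLeftConv ιT (toConv φ)) := by
  rw [Commute, SemiconjBy, ← toConv_map_ι_comp_comodCondLHS, ← toConv_map_ι_comp_comodCondRHS,
    toConv_injective.eq_iff, LinearMap.cancel_left
      (map_id_injective_of_leftInverse TensorAlgebra.ι_leftInverse)]

lemma coactMap_eq_compLeftConv (φ : WithConv (C →ₗ[R] H)) :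
    coactMap δ φ = (Algebra.TensorProduct.map (TensorAlgebra.lift R φ.ofConv)
      (AlgHom.id R H)).compLeftConv (tensorAlgebraCoaction δ) := by
  ext1
  simp [coactMap, tensorAlgebraCoaction, AlgebraTensorModule.map_eq, map_comp_map_comp]

lemma includeRight_compLeftConv_eq (φ : C →ₗ[R] H) (ψ : WithConv (C →ₗ[R] H)) :
    AlgHom.compLeftConv ι₂ ψ = (Algebra.TensorProduct.map (TensorAlgebra.lift R φ)
      (AlgHom.id R H)).compLeftConv (AlgHom.compLeftConv ιT ψ) := by
  rw [← AlgHom.compLeftConv_comp, Algebra.TensorProduct.map_comp_includeRight, AlgHom.comp_id]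

lemma commute_coactMap_of_commute (φ : WithConv (C →ₗ[R] H)) {ψ : WithConv (C →ₗ[R] H)}
    (h : Commute (tensorAlgebraCoaction δ) (AlgHom.compLeftConv ιT ψ)) :
    Commute (coactMap δ φ) (AlgHom.compLeftConv ι₂ ψ) := by
  rw [coactMap_eq_compLeftConv, includeRight_compLeftConv_eq φ.ofConv]
  exact h.map _

lemma coactTerm_eq_map_comp_comodCondLHS (φ ψ : C →ₗ[R] H) :
    coactTerm R C H δ φ ψ = map φ LinearMap.id ∘ₗ comodCondLHS R C H δ ψ := by
  have key : map LinearMap.id (mul' R H) ∘ₗ (TensorProduct.assoc R H H H).toLinearMap ∘ₗ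
      map (map φ LinearMap.id) LinearMap.id =
      map φ LinearMap.id ∘ₗ map LinearMap.id (mul' R H) ∘ₗ
        (TensorProduct.assoc R C H H).toLinearMap := by
    ext; simp
  simpa only [coactTerm, comodCondLHS, LinearMap.comp_assoc, map_comp_map_comp,
    LinearMap.id_comp, LinearMap.comp_id] using congrArg (· ∘ₗ map δ ψ ∘ₗ comul) key

lemma toConv_coactTerm (φ ψ : C →ₗ[R] H) :
    toConv (coactTerm R C H δ φ ψ) =
      coactMap δ (toConv φ) * AlgHom.compLeftConv ι₂ (toConv ψ) := by
  rw [coactMap_eq_compLeftConv, includeRight_compLeftConv_eq φ, ← map_mul,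
    ← toConv_map_ι_comp_comodCondLHS, coactTerm_eq_map_comp_comodCondLHS]
  ext1
  simp [AlgebraTensorModule.map_eq, map_comp_map_comp]

lemma antipodeTwist_mul (φ ψ : C →ₗ[R] H) :
    antipodeTwist δ φ * toConv ψ = toConv (mul' R H ∘ₗ
      map (HopfAlgebra.antipode R ∘ₗ φ) LinearMap.id ∘ₗ comodCondLHS R C H δ ψ) := by
  have key : mul' R H ∘ₗ map (mul' R H ∘ₗ
      map (HopfAlgebra.antipode R ∘ₗ φ) LinearMap.id) LinearMap.id =
      mul' R H ∘ₗ map (HopfAlgebra.antipode R ∘ₗ φ) LinearMap.id ∘ₗ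
        map LinearMap.id (mul' R H) ∘ₗ (TensorProduct.assoc R C H H).toLinearMap := by
    ext; simp [mul_assoc]
  ext1
  simpa only [antipodeTwist, comodCondLHS, LinearMap.convMul_def, ofConv_toConv,
    LinearMap.comp_assoc, map_comp_map_comp, LinearMap.id_comp, LinearMap.comp_id]
    using congrArg (· ∘ₗ map δ ψ ∘ₗ comul) key

variable {δ}

lemma IsCoflatCoaction.coactMap_mul (hδ : IsCoflatCoaction R C H δ)
    (f g : WithConv (C →ₗ[R] H)) : coactMap δ (f * g) = coactMap δ f * coactMap δ g := by
  have key : map (mul' R H ∘ₗ map f.ofConv g.ofConv) LinearMap.id ∘ₗ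
      map LinearMap.id (mul' R H) ∘ₗ
      (TensorProduct.tensorTensorTensorComm R C H C H).toLinearMap =
      mul' R (H ⊗[R] H) ∘ₗ map (map f.ofConv LinearMap.id) (map g.ofConv LinearMap.id) := by
    ext; simp
  ext1
  calc map (mul' R H ∘ₗ map f.ofConv g.ofConv ∘ₗ comul) LinearMap.id ∘ₗ δ
      = map (mul' R H ∘ₗ map f.ofConv g.ofConv) LinearMap.id ∘ₗ
          map comul LinearMap.id ∘ₗ δ := by
        rw [map_comp_map_comp, LinearMap.comp_id, LinearMap.comp_assoc]
    _ = (map (mul' R H ∘ₗ map f.ofConv g.ofConv) LinearMap.id ∘ₗ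
          map LinearMap.id (mul' R H) ∘ₗ
          (TensorProduct.tensorTensorTensorComm R C H C H).toLinearMap) ∘ₗ
          map δ δ ∘ₗ comul := by
        rw [← hδ.coflat_mul]; simp only [LinearMap.comp_assoc]
    _ = _ := by rw [key, LinearMap.comp_assoc, map_comp_map_comp]; rfl

lemma IsCoflatCoaction.comodCondLHS_counitCoaction (hδ : IsCoflatCoaction R C H δ) :
    comodCondLHS R C H δ (counitCoaction δ) = δ := by
  have key : map LinearMap.id (mul' R H) ∘ₗ (TensorProduct.assoc R C H H).toLinearMap ∘ₗ
      map LinearMap.id ((TensorProduct.lid R H).toLinearMap ∘ₗ map counit LinearMap.id) =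
      map ((TensorProduct.rid R C).toLinearMap ∘ₗ map LinearMap.id counit) LinearMap.id ∘ₗ
        map LinearMap.id (mul' R H) ∘ₗ
        (TensorProduct.tensorTensorTensorComm R C H C H).toLinearMap := by
    ext; simp [TensorProduct.smul_tmul']
  have counit_comul : (TensorProduct.rid R C).toLinearMap ∘ₗ
      map LinearMap.id counit ∘ₗ comul = LinearMap.id := by
    ext c
    simp [← LinearMap.lTensor_def, Coalgebra.lTensor_counit_comul]
  calc comodCondLHS R C H δ (counitCoaction δ)
      = (map LinearMap.id (mul' R H) ∘ₗ (TensorProduct.assoc R C H H).toLinearMap ∘ₗ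
          map LinearMap.id ((TensorProduct.lid R H).toLinearMap ∘ₗ
            map counit LinearMap.id)) ∘ₗ map δ δ ∘ₗ comul := by
        simp only [comodCondLHS, counitCoaction, LinearMap.comp_assoc, map_comp_map_comp,
          LinearMap.id_comp]
    _ = map ((TensorProduct.rid R C).toLinearMap ∘ₗ map LinearMap.id counit ∘ₗ
          comul) LinearMap.id ∘ₗ δ := by
        simp only [key, LinearMap.comp_assoc]
        rw [hδ.coflat_mul, map_comp_map_comp, LinearMap.id_comp, LinearMap.comp_assoc]
    _ = δ := by rw [counit_comul, map_id, LinearMap.id_comp]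

lemma IsCoflatCoaction.map_counitCoaction_comp (hδ : IsCoflatCoaction R C H δ) :
    map (counitCoaction δ) LinearMap.id ∘ₗ δ =
      comul ∘ₗ counitCoaction δ := by
  have key₁ : map ((TensorProduct.lid R H).toLinearMap ∘ₗ map counit LinearMap.id)
      LinearMap.id ∘ₗ (TensorProduct.assoc R C H H).symm.toLinearMap =
      (TensorProduct.lid R (H ⊗[R] H)).toLinearMap ∘ₗ map counit LinearMap.id := by
    ext; simp [TensorProduct.smul_tmul']
  have key₂ : (TensorProduct.lid R (H ⊗[R] H)).toLinearMap ∘ₗ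
      map counit LinearMap.id ∘ₗ map LinearMap.id comul =
      comul ∘ₗ (TensorProduct.lid R H).toLinearMap ∘ₗ
        map (counit (R := R) (A := C)) LinearMap.id := by
    ext; simp
  have coassoc : map δ LinearMap.id ∘ₗ δ = (TensorProduct.assoc R C H H).symm.toLinearMap ∘ₗ
      map LinearMap.id comul ∘ₗ δ := by
    rw [← hδ.coassoc]
    ext c
    simp
  calc map (counitCoaction δ) LinearMap.id ∘ₗ δ
      = map ((TensorProduct.lid R H).toLinearMap ∘ₗ map counit LinearMap.id)
          LinearMap.id ∘ₗ map δ LinearMap.id ∘ₗ δ := by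
        rw [map_comp_map_comp, LinearMap.comp_id]; rfl
    _ = comul ∘ₗ counitCoaction δ := by
        rw [coassoc, ← LinearMap.comp_assoc, key₁]
        simpa only [counitCoaction, LinearMap.comp_assoc] using congrArg (· ∘ₗ δ) key₂

lemma IsCoflatCoaction.counit_comp_counitCoaction (hδ : IsCoflatCoaction R C H δ) :
    counit ∘ₗ counitCoaction δ = counit := by
  have key : counit ∘ₗ (TensorProduct.lid R H).toLinearMap ∘ₗ
      map (counit (R := R) (A := C)) LinearMap.id =
      mul' R R ∘ₗ map counit counit := by
    ext; simp
  rw [← hδ.coflat_counit]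
  simpa only [counitCoaction, LinearMap.comp_assoc] using congrArg (· ∘ₗ δ) key

lemma IsCoflatCoaction.antipodeTwist_counitCoaction (hδ : IsCoflatCoaction R C H δ) :
    antipodeTwist δ (counitCoaction δ) = 1 := by
  ext1
  calc mul' R H ∘ₗ map (HopfAlgebra.antipode R ∘ₗ counitCoaction δ) LinearMap.id ∘ₗ δ
      = mul' R H ∘ₗ map (HopfAlgebra.antipode R) LinearMap.id ∘ₗ
          map (counitCoaction δ) LinearMap.id ∘ₗ δ := by
        rw [map_comp_map_comp, LinearMap.comp_id]
    _ = (mul' R H ∘ₗ map (HopfAlgebra.antipode R) LinearMap.id ∘ₗ comul) ∘ₗ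
          counitCoaction δ := by
        rw [hδ.map_counitCoaction_comp]; simp only [LinearMap.comp_assoc]
    _ = Algebra.linearMap R H ∘ₗ counit := by
        rw [HopfAlgebra.mul'_comp_map_antipode_comp_comul, LinearMap.comp_assoc,
          hδ.counit_comp_counitCoaction]

lemma IsCoflatCoaction.counitCoaction_eq_one (hδ : IsCoflatCoaction R C H δ) :
    toConv (counitCoaction δ) = 1 :=
  calc toConv (counitCoaction δ)
        = antipodeTwist δ (counitCoaction δ) * toConv (counitCoaction δ) := by
        rw [hδ.antipodeTwist_counitCoaction, one_mul]
    _ = antipodeTwist δ (counitCoaction δ) := by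
        rw [antipodeTwist_mul, hδ.comodCondLHS_counitCoaction]; rfl
    _ = 1 := hδ.antipodeTwist_counitCoaction

lemma IsCoflatCoaction.coactMap_one (hδ : IsCoflatCoaction R C H δ) : coactMap δ 1 = 1 := by
  have key : map (Algebra.linearMap R H ∘ₗ counit) LinearMap.id =
      (ι₂).toLinearMap ∘ₗ (TensorProduct.lid R H).toLinearMap ∘ₗ
        map (counit (R := R) (A := C)) LinearMap.id := by
    ext; simp [Algebra.algebraMap_eq_smul_one, TensorProduct.smul_tmul]
  calc coactMap δ 1 = AlgHom.compLeftConv ι₂ (toConv (counitCoaction δ)) := by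
        ext1
        simpa only [coactMap, counitCoaction, LinearMap.convOne_def, ofConv_toConv,
          AlgHom.ofConv_compLeftConv, LinearMap.comp_assoc] using congrArg (· ∘ₗ δ) key
    _ = 1 := by rw [hδ.counitCoaction_eq_one, map_one]

lemma toConv_convOne : toConv (convOne R C H) = 1 := rfl

lemma toConv_conv (φ ψ : C →ₗ[R] H) : toConv (conv R C H φ ψ) = toConv φ * toConv ψ := rfl

variable (δ) in
lemma isCocharacter_iff (φ : C →ₗ[R] H) : IsCocharacter R C H δ φ ↔
    IsUnit (toConv φ) ∧ (Bialgebra.counitAlgHom R H).compLeftConv (toConv φ) = 1 ∧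
      (Bialgebra.comulAlgHom R H).compLeftConv (toConv φ) =
        coactMap δ (toConv φ) * AlgHom.compLeftConv ι₂ (toConv φ) ∧
      Commute (tensorAlgebraCoaction δ) (AlgHom.compLeftConv ιT (toConv φ)) := by
  rw [← comodCond_iff_commute, ← toConv_coactTerm, isUnit_iff_exists]
  constructor
  · rintro ⟨⟨ψ, h₁, h₂⟩, hε, hΔ, hcomod⟩
    exact ⟨⟨toConv ψ, congrArg toConv h₁, congrArg toConv h₂⟩, WithConv.ext hε,
      WithConv.ext hΔ, hcomod⟩
  · rintro ⟨⟨ψ, h₁, h₂⟩, hε, hΔ, hcomod⟩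
    exact ⟨⟨ψ.ofConv, congrArg ofConv h₁, congrArg ofConv h₂⟩, congrArg ofConv hε,
      congrArg ofConv hΔ, hcomod⟩

lemma IsCoflatCoaction.isCocharacter_convOne (hδ : IsCoflatCoaction R C H δ) :
    IsCocharacter R C H δ (convOne R C H) := by
  refine (isCocharacter_iff δ (convOne R C H)).2 ?_
  simp only [toConv_convOne, map_one, hδ.coactMap_one, one_mul, isUnit_one, Commute.one_right,
    and_self]

lemma IsCocharacter.mul (hδ : IsCoflatCoaction R C H δ) {φ ψ : C →ₗ[R] H}
    (hφ : IsCocharacter R C H δ φ) (hψ : IsCocharacter R C H δ ψ) :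
    IsCocharacter R C H δ (conv R C H φ ψ) := by
  obtain ⟨uφ, εφ, Δφ, cφ⟩ := (isCocharacter_iff δ φ).1 hφ
  obtain ⟨uψ, εψ, Δψ, cψ⟩ := (isCocharacter_iff δ ψ).1 hψ
  refine (isCocharacter_iff δ (conv R C H φ ψ)).2 ?_
  rw [toConv_conv]
  refine ⟨uφ.mul uψ, by rw [map_mul, εφ, εψ, one_mul], ?_,
    by rw [map_mul]; exact cφ.mul_right cψ⟩
  rw [map_mul, map_mul, Δφ, Δψ, hδ.coactMap_mul, mul_assoc,
    ← mul_assoc (AlgHom.compLeftConv ι₂ _), ← (commute_coactMap_of_commute δ (toConv ψ) cφ).eq]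
  simp only [mul_assoc]

lemma IsCocharacter.antipodeTwist_mul_cancel {φ : C →ₗ[R] H} (hφ : IsCocharacter R C H δ φ) :
    antipodeTwist δ φ * toConv φ = 1 := by
  rw [antipodeTwist_mul]
  ext1
  calc mul' R H ∘ₗ map (HopfAlgebra.antipode R ∘ₗ φ) LinearMap.id ∘ₗ
        comodCondLHS R C H δ φ
      = mul' R H ∘ₗ map (HopfAlgebra.antipode R) LinearMap.id ∘ₗ
          coactTerm R C H δ φ φ := by
        rw [coactTerm_eq_map_comp_comodCondLHS, map_comp_map_comp, LinearMap.comp_id]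
    _ = (mul' R H ∘ₗ map (HopfAlgebra.antipode R) LinearMap.id ∘ₗ comul) ∘ₗ
          φ := by
        rw [← hφ.coaction]; simp only [LinearMap.comp_assoc]
    _ = Algebra.linearMap R H ∘ₗ counit := by
        rw [HopfAlgebra.mul'_comp_map_antipode_comp_comul, LinearMap.comp_assoc, hφ.counitary]

lemma IsCocharacter.mul_antipodeTwist_cancel {φ : C →ₗ[R] H} (hφ : IsCocharacter R C H δ φ) :
    toConv φ * antipodeTwist δ φ = 1 := by
  obtain ⟨ψ, h₁, -⟩ := hφ.invertible
  rw [left_inv_eq_right_inv hφ.antipodeTwist_mul_cancel (congrArg toConv h₁)]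
  exact congrArg toConv h₁

lemma IsCocharacter.isCocharacter_antipodeTwist (hδ : IsCoflatCoaction R C H δ)
    {φ : C →ₗ[R] H} (hφ : IsCocharacter R C H δ φ) :
    IsCocharacter R C H δ (antipodeTwist δ φ).ofConv := by
  obtain ⟨-, εφ, Δφ, cφ⟩ := (isCocharacter_iff δ φ).1 hφ
  have h₁ := hφ.mul_antipodeTwist_cancel
  have h₂ := hφ.antipodeTwist_mul_cancel
  set ψ := antipodeTwist δ φ
  let u : (WithConv (C →ₗ[R] TensorAlgebra R C ⊗[R] H))ˣ :=
    ⟨AlgHom.compLeftConv ιT (toConv φ), AlgHom.compLeftConv ιT ψ,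
      by rw [← map_mul, h₁, map_one], by rw [← map_mul, h₂, map_one]⟩
  have cψ : Commute (tensorAlgebraCoaction δ) (AlgHom.compLeftConv ιT ψ) :=
    cφ.units_inv_right (u := u)
  refine (isCocharacter_iff δ ψ.ofConv).2 ⟨isUnit_iff_exists.2 ⟨toConv φ, h₂, h₁⟩, ?_, ?_, cψ⟩
  · calc (Bialgebra.counitAlgHom R H).compLeftConv ψ
        = (Bialgebra.counitAlgHom R H).compLeftConv ψ *
            (Bialgebra.counitAlgHom R H).compLeftConv (toConv φ) := by rw [εφ, mul_one]
      _ = 1 := by rw [← map_mul, h₂, map_one]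
  · have hΔψ : AlgHom.compLeftConv ι₂ ψ * coactMap δ ψ =
        (Bialgebra.comulAlgHom R H).compLeftConv ψ :=
      left_inv_eq_right_inv (a := (Bialgebra.comulAlgHom R H).compLeftConv (toConv φ))
        (by rw [Δφ, mul_assoc, ← mul_assoc (coactMap δ ψ), ← hδ.coactMap_mul, h₂, hδ.coactMap_one,
          one_mul, ← map_mul, h₂, map_one])
        (by rw [← map_mul, h₁, map_one])
    simp only [toConv_ofConv]
    rw [← hΔψ, (commute_coactMap_of_commute δ ψ cψ).eq]

end Cocharacter

/-- the `H`-equivariant cocharacters `Γ(C ↻ H)` form a group under the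
convolution product: the convolution unit is a cocharacter, cocharacters are closed
under convolution, and the inverse of a cocharacter `φ` is the cocharacter
`φ^{⋆-1}(c) = S(φ(c⁽⁰⁾)) c⁽¹⁾`. -/
theorem cocharacters_form_group (R C H : Type) [CommRing R]
    [AddCommGroup C] [Module R C] [Coalgebra R C] [Ring H] [HopfAlgebra R H]
    (δ : C →ₗ[R] C ⊗[R] H) (hδ : IsCoflatCoaction R C H δ) :
    IsCocharacter R C H δ (convOne R C H) ∧
    (∀ φ ψ : C →ₗ[R] H, IsCocharacter R C H δ φ → IsCocharacter R C H δ ψ →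
      IsCocharacter R C H δ (conv R C H φ ψ)) ∧
    (∀ φ : C →ₗ[R] H, IsCocharacter R C H δ φ →
      IsCocharacter R C H δ
        ((LinearMap.mul' R H) ∘ₗ
          (TensorProduct.map ((HopfAlgebra.antipode (R := R)) ∘ₗ φ)
            (LinearMap.id : H →ₗ[R] H)) ∘ₗ δ) ∧
      conv R C H φ
        ((LinearMap.mul' R H) ∘ₗ
          (TensorProduct.map ((HopfAlgebra.antipode (R := R)) ∘ₗ φ)
            (LinearMap.id : H →ₗ[R] H)) ∘ₗ δ) = convOne R C H ∧
      conv R C H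
        ((LinearMap.mul' R H) ∘ₗ
          (TensorProduct.map ((HopfAlgebra.antipode (R := R)) ∘ₗ φ)
            (LinearMap.id : H →ₗ[R] H)) ∘ₗ δ)
        φ = convOne R C H) :=
  ⟨hδ.isCocharacter_convOne, fun _ _ hφ hψ => hφ.mul hδ hψ, fun _ hφ =>
    ⟨hφ.isCocharacter_antipodeTwist hδ, congrArg ofConv hφ.mul_antipodeTwist_cancel,
      congrArg ofConv hφ.antipodeTwist_mul_cancel⟩⟩
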